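/- Let G be an ADMG on V, C a partition of V, and G_C the quotient C-DAG. Suppose in G_C a cluster Z is a collider between clusters X and Y, i.e., G_C contains edges with arrowheads into Z from both X and Y (directed or bidirected), and there is no other adjacency between X and Y through Z. Then in G, every path from a vertex of X to a vertex of Y whose interior vertices all lie in Z contains a collider belonging to Z; consequently such a path is inactive whenever neither that collider nor any of its descendants is conditioned on. -/
import Mathlib


/-- An acyclic directed mixed graph skeleton: a directed edge relation
together with a symmetric bidirected edge relation. -/
structure MixedGraph (V : Type) where
  dir : V → V → Prop
  bi : V → V → Prop
  bi_symm : ∀ a b, bi a b → bi b a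

namespace MixedGraph

variable {V : Type} {I : Type}

/-- Adjacency: a directed edge in either orientation or a bidirected edge. -/
def Adj (G : MixedGraph V) (a b : V) : Prop :=
  G.dir a b ∨ G.dir b a ∨ G.bi a b

/-- Acyclicity of the directed part. -/
def Acyclic (G : MixedGraph V) : Prop :=
  ∀ a, ¬ Relation.TransGen G.dir a a

/-- The quotient (cluster) graph of `G` by the partition given by the fibers of `π`. -/
def quot (G : MixedGraph V) (π : V → I) : MixedGraph I where
  dir i j := i ≠ j ∧ ∃ a b, π a = i ∧ π b = j ∧ G.dir a b
  bi i j := i ≠ j ∧ ∃ a b, π a = i ∧ π b = j ∧ G.bi a b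
  bi_symm := by
    rintro i j ⟨hne, a, b, ha, hb, h⟩
    exact ⟨hne.symm, b, a, hb, ha, G.bi_symm a b h⟩

/-- The mutilated graph: delete all edges with an arrowhead into `X`
and all directed edges out of `Z`. -/
def mutil (G : MixedGraph V) (X Z : Set V) : MixedGraph V where
  dir a b := G.dir a b ∧ b ∉ X ∧ a ∉ Z
  bi a b := G.bi a b ∧ a ∉ X ∧ b ∉ X
  bi_symm := by
    rintro a b ⟨h, ha, hb⟩
    exact ⟨G.bi_symm a b h, hb, ha⟩

/-- Type of an edge as traversed along a walk. -/
inductive EType : Type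
  | fwd   -- a → b
  | bwd   -- a ← b
  | bidir -- a ↔ b
deriving DecidableEq

/-- The step relation of a walk. -/
def step (G : MixedGraph V) (a : V) (e : EType) (b : V) : Prop :=
  match e with
  | .fwd => G.dir a b
  | .bwd => G.dir b a
  | .bidir => G.bi a b

/-- A walk starting at a vertex, given by a list of (edge type, next vertex). -/
def IsWalk (G : MixedGraph V) : V → List (EType × V) → Prop
  | _, [] => True
  | a, (e, b) :: rest => G.step a e b ∧ IsWalk G b rest

/-- The final vertex of a walk. -/
def walkEnd : V → List (EType × V) → V
  | a, [] => a
  | _, (_, b) :: rest => walkEnd b rest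

/-- `b` is a descendant of `a` (along directed edges, reflexively). -/
def Desc (G : MixedGraph V) : V → V → Prop :=
  Relation.ReflTransGen G.dir

/-- Whether an interior vertex between two consecutive steps is a collider:
an arrowhead on both sides. -/
def colliderAt (e₁ e₂ : EType) : Prop :=
  (e₁ = EType.fwd ∨ e₁ = EType.bidir) ∧ (e₂ = EType.bwd ∨ e₂ = EType.bidir)

/-- A walk is active (d-connecting) given a conditioning set `S`:
every interior non-collider lies outside `S` and every interior collider
is in `S` or has a descendant in `S`. -/
def Active (G : MixedGraph V) (S : Set V) : List (EType × V) → Prop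
  | [] => True
  | [_] => True
  | (e₁, b) :: (e₂, c) :: rest =>
      ((colliderAt e₁ e₂ ∧ ∃ d ∈ S, G.Desc b d) ∨ (¬ colliderAt e₁ e₂ ∧ b ∉ S))
      ∧ Active G S ((e₂, c) :: rest)

/-- The walk contains an (interior) collider belonging to `T`. -/
def HasColliderIn (G : MixedGraph V) (T : Set V) : List (EType × V) → Prop
  | (e₁, b) :: (e₂, c) :: rest =>
      (colliderAt e₁ e₂ ∧ b ∈ T) ∨ HasColliderIn G T ((e₂, c) :: rest)
  | _ => False

/-- `X` and `Y` are d-connected given `S`: some active walk joins them. -/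
def DConn (G : MixedGraph V) (S X Y : Set V) : Prop :=
  ∃ x ∈ X, ∃ w : List (EType × V),
    w ≠ [] ∧ G.IsWalk x w ∧ walkEnd x w ∈ Y ∧ G.Active S w

/-- d-separation: no active walk between `X` and `Y` given `S`. -/
def DSep (G : MixedGraph V) (S X Y : Set V) : Prop :=
  ¬ G.DConn S X Y

end MixedGraph

open MixedGraph in
lemma aux_collider {V I : Type} (G : MixedGraph V) (π : V → I) (z y : I)
    (harrY : ∀ a b : V, π a = z → π b = y → ¬ G.dir a b) :
    ∀ (rest : List (EType × V)) (a b : V) (e₁ : EType),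
      (e₁ = EType.fwd ∨ e₁ = EType.bidir) →
      G.IsWalk a ((e₁, b) :: rest) →
      π (walkEnd a ((e₁, b) :: rest)) = y →
      (∀ v ∈ (((e₁, b) :: rest).map Prod.snd).dropLast, π v = z) →
      rest ≠ [] →
      G.HasColliderIn {v : V | π v = z} ((e₁, b) :: rest) := by
  intro rest
  induction rest with
  | nil => intro a b e₁ _ _ _ _ h; exact absurd rfl h
  | cons q rest' ih =>
    obtain ⟨e₂, c⟩ := q
    intro a b e₁ he₁ hw hend hint _
    have hb : π b = z := by
      apply hint
      simp [List.dropLast]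
    cases e₂ with
    | bwd => exact Or.inl ⟨⟨he₁, Or.inl rfl⟩, hb⟩
    | bidir => exact Or.inl ⟨⟨he₁, Or.inr rfl⟩, hb⟩
    | fwd =>
      have hbc : G.dir b c := hw.2.1
      cases rest' with
      | nil =>
        have : π c = y := hend
        exact absurd hbc (harrY b c hb this)
      | cons r rest'' =>
        refine Or.inr (ih b c EType.fwd (Or.inl rfl) hw.2 hend ?_ (by simp))
        intro v hv
        apply hint
        simp only [List.map_cons, List.dropLast, List.mem_cons] at hv ⊢
        tauto

open MixedGraph in
lemma aux_inactive {V I : Type} (G : MixedGraph V) (π : V → I) (z : I) (S : Set V)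
    (hS : ∀ v d : V, π v = z → Relation.ReflTransGen G.dir v d → d ∉ S) :
    ∀ w : List (EType × V), G.HasColliderIn {v : V | π v = z} w → ¬ G.Active S w := by
  intro w
  induction w with
  | nil => intro h; exact absurd h (by simp [HasColliderIn])
  | cons p tail ih =>
    obtain ⟨e₁, b⟩ := p
    cases tail with
    | nil => intro h; exact absurd h (by simp [HasColliderIn])
    | cons q rest =>
      obtain ⟨e₂, c⟩ := q
      intro hcol hact
      obtain ⟨hd, hact'⟩ := hact
      cases hcol with
      | inl h =>
        obtain ⟨hc, hbz⟩ := h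
        cases hd with
        | inl h' =>
          obtain ⟨_, d, hdS, hdesc⟩ := h'
          exact hS b d hbz hdesc hdS
        | inr h' => exact h'.1 hc
      | inr h => exact ih h hact'

open MixedGraph in
/-- an unconditioned collider cluster `Z` between `X` and `Y`
(all edges between `X` resp. `Y` and `Z` have their arrowhead at `Z`):
every path in `G` from `X` to `Y` with interior entirely in `Z` contains a
collider in `Z`; consequently the path is inactive given any conditioning
set that contains neither members of `Z` nor their descendants. -/
theorem stmt6 {V I : Type} (G : MixedGraph V) (π : V → I)
    (hsurj : Function.Surjective π)
    (x z y : I) (hxz : x ≠ z) (hzy : z ≠ y) (hxy : x ≠ y)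
    -- every G-edge between an X-member and a Z-member has its arrowhead at Z
    (harrX : ∀ a b : V, π a = z → π b = x → ¬ G.dir a b)
    -- every G-edge between a Y-member and a Z-member has its arrowhead at Z
    (harrY : ∀ a b : V, π a = z → π b = y → ¬ G.dir a b)
    (a : V) (w : List (EType × V))
    (ha : π a = x) (hw : G.IsWalk a w) (hend : π (MixedGraph.walkEnd a w) = y)
    (hint_ne : (w.map Prod.snd).dropLast ≠ [])
    (hint : ∀ v ∈ (w.map Prod.snd).dropLast, π v = z) :
    G.HasColliderIn {v : V | π v = z} w ∧
    ∀ S : Set V, (∀ v d : V, π v = z → Relation.ReflTransGen G.dir v d → d ∉ S) →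
      ¬ G.Active S w := by
  have hcol : G.HasColliderIn {v : V | π v = z} w := by
    match w, hw, hend, hint_ne, hint with
    | [], _, _, hne, _ => exact absurd rfl hne
    | [(e₁, b)], _, _, hne, _ => simp at hne
    | (e₁, b) :: (e₂, c) :: rest, hw, hend, hne, hint =>
      have hb : π b = z := by apply hint; simp [List.dropLast]
      have he₁ : e₁ = EType.fwd ∨ e₁ = EType.bidir := by
        cases e₁ with
        | fwd => exact Or.inl rfl
        | bidir => exact Or.inr rfl
        | bwd =>
          have : G.dir b a := hw.1
          exact absurd this (harrX b a hb ha)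
      exact aux_collider G π z y harrY ((e₂, c) :: rest) a b e₁ he₁ hw hend hint (by simp)
  exact ⟨hcol, fun S hS => aux_inactive G π z S hS w hcol⟩
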